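/- Let (Ω, 𝓕, μ) be a probability space with 𝓕 a standard Borel structure, let Y : Ω → E be a measurable map into a measurable space E, let X₁, X₂ : Ω → ℝ be measurable, and let L : Ω → F be a measurable map into a measurable space F. Suppose (i) Y is conditionally independent of X₁ given the σ-algebra generated by L, and (ii) Y is conditionally independent of X₂ − X₁ given the σ-algebra generated by (X₁, L). Then Y is conditionally independent of X₂ given the σ-algebra generated by (X₁, L). -/

import Mathlib

/-!
Given `σ(X₁, L)`, the variable `X₁` is known, so the indicator of a `σ(X₁)`-measurable set factors
out of conditional expectations. Hence conditional independence of `Y` from `X₂ - X₁` upgrades to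
conditional independence from the pair `(X₂ - X₁, X₁)`, and `X₂` is a function of that pair.
-/

open MeasureTheory ProbabilityTheory MeasurableSpace Set

theorem IsPiSystem.image2_inter {α : Type*} {p₁ p₂ : Set (Set α)} (h₁ : IsPiSystem p₁)
    (h₂ : IsPiSystem p₂) : IsPiSystem (image2 (· ∩ ·) p₁ p₂) := by
  rintro _ ⟨s₁, hs₁, t₁, ht₁, rfl⟩ _ ⟨s₂, hs₂, t₂, ht₂, rfl⟩ hne
  rw [inter_inter_inter_comm] at hne ⊢
  exact mem_image2_of_mem (h₁ _ hs₁ _ hs₂ (hne.mono inter_subset_left))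
    (h₂ _ ht₁ _ ht₂ (hne.mono inter_subset_right))

theorem MeasurableSpace.sup_eq_generateFrom_image2_inter {α : Type*} (m₁ m₂ : MeasurableSpace α) :
    m₁ ⊔ m₂ =
      generateFrom (image2 (· ∩ ·) {s | MeasurableSet[m₁] s} {t | MeasurableSet[m₂] t}) := by
  refine le_antisymm (sup_le (fun s hs => ?_) (fun t ht => ?_)) (generateFrom_le ?_)
  · exact measurableSet_generateFrom ⟨s, hs, univ, .univ, inter_univ s⟩
  · exact measurableSet_generateFrom ⟨univ, .univ, t, ht, univ_inter t⟩
  · rintro _ ⟨s, hs, t, ht, rfl⟩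
    exact (le_sup_left (a := m₁) _ hs).inter (le_sup_right (b := m₂) _ ht)

theorem MeasureTheory.condExp_inter_ae_eq_indicator {Ω : Type*} {m' mΩ : MeasurableSpace Ω}
    {μ : Measure Ω} [IsFiniteMeasure μ] {s c : Set Ω} (hs : MeasurableSet s)
    (hc : MeasurableSet[m'] c) : μ⟦s ∩ c | m'⟧ =ᵐ[μ] c.indicator (μ⟦s | m'⟧) := by
  rw [inter_comm, ← indicator_indicator]
  exact condExp_indicator ((integrable_const 1).indicator hs) hc

namespace ProbabilityTheory

variable {Ω : Type*} {m' mΩ : MeasurableSpace Ω} [StandardBorelSpace Ω] {hm' : m' ≤ mΩ}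
  {μ : Measure Ω} [IsFiniteMeasure μ]

theorem CondIndep.sup_right_of_le {m₁ m₂ m₃ : MeasurableSpace Ω} (hm₁ : m₁ ≤ mΩ)
    (hm₂ : m₂ ≤ mΩ) (h : CondIndep m' m₁ m₂ hm' μ) (hm₃ : m₃ ≤ m') :
    CondIndep m' m₁ (m₂ ⊔ m₃) hm' μ := by
  refine CondIndepSets.condIndep hm₁ (sup_le hm₂ (hm₃.trans hm'))
    (@isPiSystem_measurableSet Ω m₁)
    ((@isPiSystem_measurableSet Ω m₂).image2_inter (@isPiSystem_measurableSet Ω m₃))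
    (@generateFrom_measurableSet Ω m₁).symm (sup_eq_generateFrom_image2_inter m₂ m₃) ?_
  rw [condIndepSets_iff m' hm' {s | MeasurableSet[m₁] s} _ (fun s hs => hm₁ s hs)
    (by rintro _ ⟨d, hd, c, hc, rfl⟩; exact (hm₂ d hd).inter (hm' c (hm₃ c hc)))]
  rintro t _ ht ⟨d, hd, c, hc, rfl⟩
  have hc' : MeasurableSet[m'] c := hm₃ c hc
  calc μ⟦t ∩ (d ∩ c) | m'⟧ = μ⟦t ∩ d ∩ c | m'⟧ := by rw [inter_assoc]
    _ =ᵐ[μ] c.indicator (μ⟦t ∩ d | m'⟧) :=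
      condExp_inter_ae_eq_indicator ((hm₁ t ht).inter (hm₂ d hd)) hc'
    _ =ᵐ[μ] c.indicator (μ⟦t | m'⟧ * μ⟦d | m'⟧) :=
      ((condIndep_iff _ _ _ hm' hm₁ hm₂ μ).1 h t d ht hd).indicator
    _ = μ⟦t | m'⟧ * c.indicator (μ⟦d | m'⟧) :=
      funext fun ω => indicator_mul_right c _ _ (i := ω)
    _ =ᵐ[μ] μ⟦t | m'⟧ * μ⟦d ∩ c | m'⟧ :=
      Filter.EventuallyEq.rfl.mul (condExp_inter_ae_eq_indicator (hm₂ d hd) hc').symm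

theorem CondIndepFun.prodMk_right_of_measurable {β γ δ : Type*} [MeasurableSpace β]
    [MeasurableSpace γ] [MeasurableSpace δ] {f : Ω → β} {g : Ω → γ} {h : Ω → δ}
    (hfg : CondIndepFun m' hm' f g μ) (hf : Measurable f) (hg : Measurable g)
    (hh : Measurable[m'] h) : CondIndepFun m' hm' f (fun ω => (g ω, h ω)) μ := by
  rw [condIndepFun_iff_condIndep] at hfg ⊢
  have h_sup := hfg.sup_right_of_le hf.comap_le hg.comap_le hh.comap_le
  rwa [← comap_prodMk] at h_sup

end ProbabilityTheory

theorem condIndep_of_condIndep_increment_general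
    {Ω E F : Type*} [mΩ : MeasurableSpace Ω] [StandardBorelSpace Ω]
    [MeasurableSpace E] [MeasurableSpace F]
    (μ : Measure Ω) [IsProbabilityMeasure μ]
    (Y : Ω → E) (X₁ X₂ : Ω → ℝ) (L : Ω → F)
    (hY : Measurable Y) (hX₁ : Measurable X₁) (hX₂ : Measurable X₂) (hL : Measurable L)
    (h2 : CondIndepFun (MeasurableSpace.comap (fun ω => (X₁ ω, L ω)) inferInstance)
      (measurable_iff_comap_le.mp (hX₁.prodMk hL)) Y (fun ω => X₂ ω - X₁ ω) μ) :
    CondIndepFun (MeasurableSpace.comap (fun ω => (X₁ ω, L ω)) inferInstance)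
      (measurable_iff_comap_le.mp (hX₁.prodMk hL)) Y X₂ μ := by
  have hX₁_cond : Measurable[MeasurableSpace.comap (fun ω => (X₁ ω, L ω)) inferInstance] X₁ :=
    measurable_fst.comp (comap_measurable _)
  have h_pair := h2.prodMk_right_of_measurable hY (hX₂.sub hX₁) hX₁_cond
  simpa [Function.comp_def] using h_pair.comp measurable_id (measurable_fst.add measurable_snd)

/-- **Lemma 2 (transfer of conditional independence to `X₂ = X₁ + (X₂ − X₁)`).**
On a standard Borel probability space, if `Y` is conditionally independent of `X₁`
given `σ(L)`, and `Y` is conditionally independent of the increment `X₂ − X₁` given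
`σ(X₁, L)`, then `Y` is conditionally independent of `X₂` given `σ(X₁, L)`. -/
theorem condIndep_of_condIndep_increment
    {Ω E F : Type*} [mΩ : MeasurableSpace Ω] [StandardBorelSpace Ω]
    [MeasurableSpace E] [MeasurableSpace F]
    (μ : Measure Ω) [IsProbabilityMeasure μ]
    (Y : Ω → E) (X₁ X₂ : Ω → ℝ) (L : Ω → F)
    (hY : Measurable Y) (hX₁ : Measurable X₁) (hX₂ : Measurable X₂) (hL : Measurable L)
    (h1 : CondIndepFun (MeasurableSpace.comap L inferInstance)
      (measurable_iff_comap_le.mp hL) Y X₁ μ)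
    (h2 : CondIndepFun (MeasurableSpace.comap (fun ω => (X₁ ω, L ω)) inferInstance)
      (measurable_iff_comap_le.mp (hX₁.prodMk hL)) Y (fun ω => X₂ ω - X₁ ω) μ) :
    CondIndepFun (MeasurableSpace.comap (fun ω => (X₁ ω, L ω)) inferInstance)
      (measurable_iff_comap_le.mp (hX₁.prodMk hL)) Y X₂ μ :=
  condIndep_of_condIndep_increment_general (mΩ := mΩ) μ Y X₁ X₂ L hY hX₁ hX₂ hL h2
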